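/- arXiv:1804.03069 — 6 statements merged into one kernel-verified Lean document; each statement's English description precedes it below -/
import Mathlib

section
/- For every integer k ≥ 2, uniformly for x in [0, m^{-α}] where α = (1/2)(1/k + 1/(k+1)), we have (Γ(k,x)/Γ(k))^m = (1 + O(m^{-1/(2k)})) · exp(-m x^k / k!), where Γ(k,x) is the upper incomplete gamma function. More precisely, there exists a constant C depending only on k such that for all m ≥ 1 and all x ∈ [0, m^{-α}], |(Γ(k,x)/Γ(k))^m · exp(m x^k / k!) - 1| ≤ C m^{-1/(2k)}. -/
/-!
Write `p = P(G_k ≤ x) = 1 - Γ(k,x)/Γ(k)` and `A = x^k/k!`. Integrating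
`1 - t ≤ e^{-t} ≤ 1` against `t^{k-1}` gives `A - x^{k+1} ≤ p ≤ A ≤ x^k/2`, and
`-p - 2p² ≤ log (1 - p) ≤ -p` for `p ≤ 1/2`. Hence `E = m (log (1 - p) + A)` satisfies
`-m x^{2k}/2 ≤ E ≤ m x^{k+1}`. For `x ≤ m^{-α}` both `m x^{k+1}` and `m x^{2k}` are at most
`m^{-1/(2k)} ≤ 1`, and `|e^E - 1| ≤ 2|E|` gives the bound with `C = 2`.
-/

open MeasureTheory Real Set

/-- The upper incomplete gamma function `Γ(k,x) = ∫_x^∞ t^{k-1} e^{-t} dt`. -/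
noncomputable def upperGamma (k : ℕ) (x : ℝ) : ℝ :=
  ∫ t in Set.Ioi x, t ^ (k - 1) * Real.exp (-t)

open scoped Nat
open intervalIntegral

lemma integrableOn_pow_mul_exp_neg_Ioi (n : ℕ) {x : ℝ} (hx : 0 ≤ x) :
    IntegrableOn (fun t : ℝ => t ^ n * exp (-t)) (Ioi x) := by
  refine ((GammaIntegral_convergent n.cast_add_one_pos).congr_fun (fun t _ => ?_)
    measurableSet_Ioi).mono_set (Ioi_subset_Ioi hx)
  simp [mul_comm, ← rpow_natCast]

lemma setIntegral_Ioi_zero_pow_mul_exp_neg (n : ℕ) :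
    ∫ t in Ioi (0 : ℝ), t ^ n * exp (-t) = n ! := by
  rw [← Gamma_nat_eq_factorial, Gamma_eq_integral n.cast_add_one_pos]
  refine setIntegral_congr_fun measurableSet_Ioi (fun t _ => ?_)
  simp [mul_comm, ← rpow_natCast]

lemma upperGamma_succ (n : ℕ) {x : ℝ} (hx : 0 ≤ x) :
    upperGamma (n + 1) x = (n ! : ℝ) - ∫ t in (0 : ℝ)..x, t ^ n * exp (-t) := by
  rw [← setIntegral_Ioi_zero_pow_mul_exp_neg, ← Ioc_union_Ioi_eq_Ioi hx,
    setIntegral_union (Ioc_disjoint_Ioi le_rfl) measurableSet_Ioi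
      ((integrableOn_pow_mul_exp_neg_Ioi n le_rfl).mono_set Ioc_subset_Ioi_self)
      (integrableOn_pow_mul_exp_neg_Ioi n hx), integral_of_le hx, upperGamma]
  simp

lemma integral_pow_mul_exp_neg_le (n : ℕ) {x : ℝ} (hx : 0 ≤ x) :
    ∫ t in (0 : ℝ)..x, t ^ n * exp (-t) ≤ x ^ (n + 1) / (n + 1) := by
  calc ∫ t in (0 : ℝ)..x, t ^ n * exp (-t) ≤ ∫ t in (0 : ℝ)..x, t ^ n := by
        refine integral_mono_on hx ((by fun_prop : Continuous _).intervalIntegrable _ _)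
          ((by fun_prop : Continuous _).intervalIntegrable _ _) fun t ht => ?_
        exact mul_le_of_le_one_right (pow_nonneg ht.1 n) (exp_le_one_iff.mpr (by linarith [ht.1]))
    _ = x ^ (n + 1) / (n + 1) := by simp [integral_pow]

lemma sub_le_integral_pow_mul_exp_neg (n : ℕ) {x : ℝ} (hx : 0 ≤ x) :
    x ^ (n + 1) / (n + 1) - x ^ (n + 2) / (n + 2) ≤ ∫ t in (0 : ℝ)..x, t ^ n * exp (-t) := by
  calc x ^ (n + 1) / (n + 1) - x ^ (n + 2) / (n + 2)
        = ∫ t in (0 : ℝ)..x, (t ^ n - t ^ (n + 1)) := by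
        rw [intervalIntegral.integral_sub ((continuous_pow _).intervalIntegrable _ _)
          ((continuous_pow _).intervalIntegrable _ _)]
        simp [integral_pow]
        ring
    _ ≤ ∫ t in (0 : ℝ)..x, t ^ n * exp (-t) := by
        refine integral_mono_on hx ((by fun_prop : Continuous _).intervalIntegrable _ _)
          ((by fun_prop : Continuous _).intervalIntegrable _ _) fun t ht => ?_
        have := add_one_le_exp (-t)
        calc t ^ n - t ^ (n + 1) = t ^ n * (-t + 1) := by ring
          _ ≤ t ^ n * exp (-t) := by have := ht.1; gcongr

/-- `P(n + 1, x) = 1 - Γ(n + 1, x) / Γ(n + 1)`; note the index shift. -/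
noncomputable def regLowerGamma (n : ℕ) (x : ℝ) : ℝ :=
  (∫ t in (0 : ℝ)..x, t ^ n * exp (-t)) / n !

lemma upperGamma_succ_div_factorial (n : ℕ) {x : ℝ} (hx : 0 ≤ x) :
    upperGamma (n + 1) x / n ! = 1 - regLowerGamma n x := by
  rw [upperGamma_succ n hx, regLowerGamma, sub_div, div_self (by positivity)]

lemma regLowerGamma_nonneg (n : ℕ) {x : ℝ} (hx : 0 ≤ x) : 0 ≤ regLowerGamma n x :=
  div_nonneg (integral_nonneg hx fun t ht => by have := ht.1; positivity) (by positivity)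

lemma pow_div_succ_div_factorial (n : ℕ) (x : ℝ) :
    x ^ (n + 1) / (n + 1) / n ! = x ^ (n + 1) / (n + 1)! := by
  rw [div_div, Nat.factorial_succ]; push_cast; ring

lemma regLowerGamma_le (n : ℕ) {x : ℝ} (hx : 0 ≤ x) :
    regLowerGamma n x ≤ x ^ (n + 1) / (n + 1)! := by
  rw [← pow_div_succ_div_factorial, regLowerGamma]
  gcongr
  exact integral_pow_mul_exp_neg_le n hx

lemma sub_pow_le_regLowerGamma (n : ℕ) {x : ℝ} (hx : 0 ≤ x) :
    x ^ (n + 1) / (n + 1)! - x ^ (n + 2) ≤ regLowerGamma n x := by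
  have hrem : x ^ (n + 2) / (n + 2) / n ! ≤ x ^ (n + 2) := by
    have : (1 : ℝ) ≤ n ! := mod_cast n.factorial_pos
    rw [div_div]
    exact div_le_self (by positivity) (by nlinarith)
  calc x ^ (n + 1) / (n + 1)! - x ^ (n + 2)
      ≤ (x ^ (n + 1) / (n + 1) - x ^ (n + 2) / (n + 2)) / n ! := by
        rw [sub_div, pow_div_succ_div_factorial]; linarith
    _ ≤ regLowerGamma n x := by
        rw [regLowerGamma]; gcongr; exact sub_le_integral_pow_mul_exp_neg n hx

lemma neg_sub_two_mul_sq_le_log_one_sub {p : ℝ} (hp0 : 0 ≤ p) (hp : p ≤ 1 / 2) :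
    -p - 2 * p ^ 2 ≤ log (1 - p) := by
  have h := abs_log_sub_add_sum_range_le (x := p) (by rw [abs_of_nonneg hp0]; linarith) 1
  rw [abs_of_nonneg hp0] at h
  have hquad : p ^ 2 / (1 - p) ≤ 2 * p ^ 2 := by
    rw [div_le_iff₀ (by linarith)]
    nlinarith [mul_nonneg (sq_nonneg p) (show 0 ≤ 1 - 2 * p by linarith)]
  simp only [Finset.range_one, Finset.sum_singleton, zero_add, pow_one, CharP.cast_eq_zero,
    div_one, Nat.reduceAdd] at h
  linarith [(abs_le.mp (h.trans hquad)).1]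

lemma regLowerGamma_le_half_pow (n : ℕ) (hn : 1 ≤ n) {x : ℝ} (hx : 0 ≤ x) :
    regLowerGamma n x ≤ x ^ (n + 1) / 2 :=
  (regLowerGamma_le n hx).trans <| div_le_div_of_nonneg_left (by positivity) two_pos
    (mod_cast Nat.factorial_le (show 2 ≤ n + 1 by omega))

lemma log_upperGamma_div_factorial_add_mem (n : ℕ) (hn : 1 ≤ n) {x : ℝ} (hx0 : 0 ≤ x)
    (hx1 : x ≤ 1) :
    log (upperGamma (n + 1) x / n !) + x ^ (n + 1) / (n + 1)! ∈
      Icc (-(x ^ (2 * (n + 1)) / 2)) (x ^ (n + 2)) := by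
  set p := regLowerGamma n x
  have hp0 : 0 ≤ p := regLowerGamma_nonneg n hx0
  have hp : p ≤ x ^ (n + 1) / 2 := regLowerGamma_le_half_pow n hn hx0
  have hxn : x ^ (n + 1) ≤ 1 := pow_le_one₀ hx0 hx1
  have hp2 : 2 * p ^ 2 ≤ x ^ (2 * (n + 1)) / 2 := by
    rw [mul_comm 2 (n + 1), pow_mul]
    nlinarith [mul_le_mul hp hp hp0 (by positivity)]
  rw [upperGamma_succ_div_factorial n hx0]
  refine ⟨?_, ?_⟩
  · linarith [neg_sub_two_mul_sq_le_log_one_sub hp0 (by linarith), regLowerGamma_le n hx0]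
  · linarith [log_le_sub_one_of_pos (show 0 < 1 - p by linarith), sub_pow_le_regLowerGamma n hx0]

lemma mul_pow_le_rpow_of_le_rpow_neg {m x a : ℝ} (hm : 0 < m) (hx0 : 0 ≤ x)
    (hx : x ≤ m ^ (-a)) (j : ℕ) : m * x ^ j ≤ m ^ (1 - a * j) := by
  calc m * x ^ j ≤ m * (m ^ (-a)) ^ j := by gcongr
    _ = m ^ (1 - a * j) := by
      rw [← rpow_natCast, ← rpow_mul hm.le, sub_eq_add_neg, rpow_add hm, rpow_one, neg_mul]

theorem stmt0 (k : ℕ) (hk : 2 ≤ k) :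
    ∃ C : ℝ, ∀ m : ℕ, 1 ≤ m →
      ∀ x ∈ Set.Icc (0 : ℝ) ((m : ℝ) ^ (-((1 : ℝ) / 2 * (1 / k + 1 / (k + 1))))),
        |(upperGamma k x / (Nat.factorial (k - 1) : ℝ)) ^ m *
            Real.exp ((m : ℝ) * x ^ k / (Nat.factorial k : ℝ)) - 1|
          ≤ C * (m : ℝ) ^ (-(1 / (2 * (k : ℝ)))) := by
  obtain ⟨n, rfl⟩ : ∃ n, k = n + 1 := ⟨k - 1, by omega⟩
  refine ⟨2, fun m hm x ⟨hx0, hx⟩ => ?_⟩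
  simp only [Nat.add_sub_cancel]
  push_cast at hx ⊢
  set y := (m : ℝ) ^ (-(1 / (2 * ((n : ℝ) + 1))))
  have hm1 : (1 : ℝ) ≤ m := mod_cast hm
  have hm0 : (0 : ℝ) < m := by linarith
  have hy1 : y ≤ 1 := rpow_le_one_of_one_le_of_nonpos hm1 (by rw [neg_nonpos]; positivity)
  have hx1 : x ≤ 1 :=
    hx.trans (rpow_le_one_of_one_le_of_nonpos hm1 (by rw [neg_nonpos]; positivity))
  -- `α (k + 1) = 1 + 1/(2k)` and `α 2k = 1 + k/(k+1) ≥ 1 + 1/(2k)`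
  have hsucc : m * x ^ (n + 2) ≤ y := by
    refine (mul_pow_le_rpow_of_le_rpow_neg hm0 hx0 hx _).trans_eq (congrArg _ ?_)
    push_cast; field_simp; ring
  have hdouble : m * x ^ (2 * (n + 1)) ≤ y := by
    refine (mul_pow_le_rpow_of_le_rpow_neg hm0 hx0 hx _).trans
      (rpow_le_rpow_of_exponent_le hm1 ?_)
    push_cast; field_simp; nlinarith
  obtain ⟨hlo, hhi⟩ := log_upperGamma_div_factorial_add_mem n (by omega) hx0 hx1
  have hF : 0 < upperGamma (n + 1) x / n ! := by
    rw [upperGamma_succ_div_factorial n hx0]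
    linarith [regLowerGamma_le_half_pow n (by omega) hx0, pow_le_one₀ hx0 hx1 (n := n + 1)]
  set E := m * (log (upperGamma (n + 1) x / n !) + x ^ (n + 1) / (n + 1)!) with hE_def
  have hE : |E| ≤ y := abs_le.mpr ⟨by nlinarith, by nlinarith⟩
  have hexp : (upperGamma (n + 1) x / n !) ^ m * exp (m * x ^ (n + 1) / (n + 1)!) = exp E := by
    rw [← exp_log hF, ← exp_nat_mul, ← exp_add, hE_def]; ring_nf
  calc _ = |exp E - 1| := by rw [hexp]
    _ ≤ 2 * |E| := abs_exp_sub_one_le (hE.trans hy1)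
    _ ≤ 2 * y := by linarith
end

section
/- For a > 0, b > 0 and integer k ≥ 2, with ξ_k(a,b) = ∫_0^∞ ∫_y^∞ exp(-a x^k/k! - b y^k/k!) dx dy, the normalized quantity (k / (Γ(2/k)(k!)^{2/k})) · ξ_k(a,b) satisfies the two-sided bound (a+b)^{-2/k} ≤ (k / (Γ(2/k)(k!)^{2/k})) ξ_k(a,b) ≤ a^{-2/k} + b^{-2/k}. -/
open MeasureTheory Real Set

/-- `ξ_k(a,b) = ∫_0^∞ ∫_y^∞ exp(-a x^k/k! - b y^k/k!) dx dy`. -/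
noncomputable def xiInt (k : ℕ) (a b : ℝ) : ℝ :=
  ∫ y in Set.Ioi (0 : ℝ), ∫ x in Set.Ioi y,
    Real.exp (-a * x ^ k / (Nat.factorial k : ℝ) - b * y ^ k / (Nat.factorial k : ℝ))

/-!
On the region `0 < y < x` the exponent `-a x^k/k! - b y^k/k!` lies between `-(a+b) x^k/k!` and
`-a x^k/k!`, so `ξ_k(a,b)` is squeezed between two integrals whose integrand depends on `x` only.
Integrating out `y` turns such an integral into
`∫_0^∞ x exp(-c x^k/k!) dx = Γ(2/k) (k!)^{2/k} c^{-2/k} / k`, a Gamma integral. Both steps are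
done for lower Lebesgue integrals, where they need no integrability side conditions; the upper
bound then shows that the lower integral of `ξ_k(a,b)` is finite, so it agrees with the Bochner one.
-/

open scoped ENNReal Nat

theorem lintegral_Ioi_lintegral_Ioi_eq_lintegral_mul {h : ℝ → ℝ≥0∞} (hh : Measurable h) (a : ℝ) :
    ∫⁻ y in Ioi a, ∫⁻ x in Ioi y, h x = ∫⁻ x in Ioi a, ENNReal.ofReal (x - a) * h x := by
  have hinner : ∀ y ∈ Ioi a, ∫⁻ x in Ioi y, h x = ∫⁻ x in Ioi a, (Ioi y).indicator h x := by
    intro y hy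
    rw [lintegral_indicator measurableSet_Ioi, Measure.restrict_restrict measurableSet_Ioi,
      Ioi_inter_Ioi, sup_eq_left.mpr (le_of_lt hy)]
  have hswap : ∀ x y : ℝ, (Ioi y).indicator h x = (Iio x).indicator (fun _ ↦ h x) y := by
    intro x y
    by_cases hyx : y < x <;> simp [hyx]
  have hmeas : Measurable (Function.uncurry fun y x : ℝ ↦ (Ioi y).indicator h x) := by
    have : (Function.uncurry fun y x : ℝ ↦ (Ioi y).indicator h x)
        = {p : ℝ × ℝ | p.1 < p.2}.indicator (fun p ↦ h p.2) := by
      funext ⟨y, x⟩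
      by_cases hyx : y < x <;> simp [indicator_apply, hyx]
    rw [this]
    exact (hh.comp measurable_snd).indicator (measurableSet_lt measurable_fst measurable_snd)
  rw [setLIntegral_congr_fun measurableSet_Ioi hinner, lintegral_lintegral_swap hmeas.aemeasurable]
  refine setLIntegral_congr_fun measurableSet_Ioi fun x _ ↦ ?_
  simp_rw [hswap x]
  rw [lintegral_indicator measurableSet_Iio, setLIntegral_const,
    Measure.restrict_apply measurableSet_Iio, Iio_inter_Ioi, Real.volume_Ioo, mul_comm]

theorem lintegral_Ioi_lintegral_Ioi_mono {f g : ℝ → ℝ → ℝ≥0∞} {a : ℝ}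
    (hfg : ∀ y x, a < y → y < x → f y x ≤ g y x) :
    ∫⁻ y in Ioi a, ∫⁻ x in Ioi y, f y x ≤ ∫⁻ y in Ioi a, ∫⁻ x in Ioi y, g y x :=
  setLIntegral_mono' measurableSet_Ioi fun y hy ↦
    setLIntegral_mono' measurableSet_Ioi fun x hx ↦ hfg y x hy hx

theorem integral_Ioi_integral_Ioi_eq_toReal {f : ℝ → ℝ → ℝ}
    (hf : Measurable (Function.uncurry f)) (hf0 : ∀ y x, 0 ≤ f y x) {a : ℝ}
    (hfin : ∫⁻ y in Ioi a, ∫⁻ x in Ioi y, ENNReal.ofReal (f y x) ≠ ∞) :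
    ∫ y in Ioi a, ∫ x in Ioi y, f y x
      = (∫⁻ y in Ioi a, ∫⁻ x in Ioi y, ENNReal.ofReal (f y x)).toReal := by
  have hinner : Measurable fun y ↦ ∫⁻ x in Ioi y, ENNReal.ofReal (f y x) := by
    have : (fun y ↦ ∫⁻ x in Ioi y, ENNReal.ofReal (f y x)) = fun y ↦
        ∫⁻ x, {p : ℝ × ℝ | p.1 < p.2}.indicator (fun p ↦ ENNReal.ofReal (f p.1 p.2)) (y, x) := by
      funext y
      rw [← lintegral_indicator measurableSet_Ioi]
      congr 1
    rw [this]
    exact (hf.ennreal_ofReal.indicator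
      (measurableSet_lt measurable_fst measurable_snd)).lintegral_prod_right'
  calc ∫ y in Ioi a, ∫ x in Ioi y, f y x
      = ∫ y in Ioi a, (∫⁻ x in Ioi y, ENNReal.ofReal (f y x)).toReal := by
        congr 1
        funext y
        exact integral_eq_lintegral_of_nonneg_ae (ae_of_all _ (hf0 y))
          (hf.comp measurable_prodMk_left).aestronglyMeasurable
    _ = _ := integral_toReal hinner.aemeasurable (ae_lt_top' hinner.aemeasurable hfin)

section Moment

variable {k : ℕ} {c d : ℝ}

theorem integrableOn_mul_exp_neg_mul_pow_div (hk : 0 < k) (hc : 0 < c) (hd : 0 < d) :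
    IntegrableOn (fun x : ℝ ↦ x * exp (-c * x ^ k / d)) (Ioi 0) := by
  refine (integrableOn_rpow_mul_exp_neg_mul_rpow (p := k) (s := 1) (by norm_num)
    (by exact_mod_cast hk) (div_pos hc hd)).congr_fun (fun x _ ↦ ?_) measurableSet_Ioi
  simp only [rpow_one, rpow_natCast]
  ring_nf

theorem integral_mul_exp_neg_mul_pow_div (hk : 0 < k) (hc : 0 < c) (hd : 0 < d) :
    ∫ x in Ioi (0 : ℝ), x * exp (-c * x ^ k / d)
      = Gamma (2 / k) * d ^ ((2 : ℝ) / k) / k * c ^ (-(2 : ℝ) / k) := by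
  have h := integral_rpow_mul_exp_neg_mul_rpow (p := k) (q := 1) (by exact_mod_cast hk)
    (by norm_num) (div_pos hc hd)
  rw [one_add_one_eq_two] at h
  calc ∫ x in Ioi (0 : ℝ), x * exp (-c * x ^ k / d)
      = ∫ x in Ioi (0 : ℝ), x ^ (1 : ℝ) * exp (-(c / d) * x ^ (k : ℝ)) :=
        setIntegral_congr_fun measurableSet_Ioi fun x _ ↦ by
          simp only [rpow_one, rpow_natCast]
          ring_nf
    _ = _ := by
        rw [h, div_rpow hc.le hd.le, neg_div, rpow_neg hd.le, rpow_neg hc.le]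
        field_simp

theorem lintegral_Ioi_lintegral_Ioi_exp_neg_mul_pow_div (hk : 0 < k) (hc : 0 < c)
    (hd : 0 < d) :
    ∫⁻ y in Ioi 0, ∫⁻ x in Ioi y, ENNReal.ofReal (exp (-c * x ^ k / d))
      = ENNReal.ofReal (Gamma (2 / k) * d ^ ((2 : ℝ) / k) / k * c ^ (-(2 : ℝ) / k)) := by
  rw [lintegral_Ioi_lintegral_Ioi_eq_lintegral_mul (by fun_prop),
    ← integral_mul_exp_neg_mul_pow_div hk hc hd,
    ofReal_integral_eq_lintegral_ofReal (integrableOn_mul_exp_neg_mul_pow_div hk hc hd)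
      ((ae_restrict_iff' measurableSet_Ioi).mpr (ae_of_all _ fun x hx ↦
        mul_nonneg (le_of_lt hx) (exp_pos _).le))]
  refine setLIntegral_congr_fun measurableSet_Ioi fun x hx ↦ ?_
  rw [sub_zero, ENNReal.ofReal_mul (le_of_lt hx)]

end Moment

noncomputable def xiLIntegral (k : ℕ) (a b : ℝ) : ℝ≥0∞ :=
  ∫⁻ y in Ioi 0, ∫⁻ x in Ioi y,
    ENNReal.ofReal (exp (-a * x ^ k / (k ! : ℝ) - b * y ^ k / (k ! : ℝ)))

section Xi

variable {k : ℕ} {a b : ℝ}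

theorem xiLIntegral_le (hk : 0 < k) (ha : 0 < a) (hb : 0 ≤ b) :
    xiLIntegral k a b
      ≤ ENNReal.ofReal (Gamma (2 / k) * (k ! : ℝ) ^ ((2 : ℝ) / k) / k * a ^ (-(2 : ℝ) / k)) := by
  rw [xiLIntegral, ← lintegral_Ioi_lintegral_Ioi_exp_neg_mul_pow_div hk ha (by positivity)]
  refine lintegral_Ioi_lintegral_Ioi_mono fun y x hy _ ↦
    ENNReal.ofReal_le_ofReal (exp_le_exp.mpr ?_)
  have : 0 ≤ b * y ^ k / k ! := by positivity
  linarith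

theorem ofReal_le_xiLIntegral (hk : 0 < k) (hab : 0 < a + b) (hb : 0 ≤ b) :
    ENNReal.ofReal (Gamma (2 / k) * (k ! : ℝ) ^ ((2 : ℝ) / k) / k * (a + b) ^ (-(2 : ℝ) / k))
      ≤ xiLIntegral k a b := by
  rw [xiLIntegral, ← lintegral_Ioi_lintegral_Ioi_exp_neg_mul_pow_div hk hab (by positivity)]
  refine lintegral_Ioi_lintegral_Ioi_mono fun y x hy hyx ↦
    ENNReal.ofReal_le_ofReal (exp_le_exp.mpr ?_)
  calc -(a + b) * x ^ k / (k ! : ℝ) = -a * x ^ k / (k ! : ℝ) - b * x ^ k / (k ! : ℝ) := by ring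
    _ ≤ -a * x ^ k / (k ! : ℝ) - b * y ^ k / (k ! : ℝ) := by gcongr

theorem xiInt_eq_toReal_xiLIntegral (h : xiLIntegral k a b ≠ ∞) :
    xiInt k a b = (xiLIntegral k a b).toReal :=
  integral_Ioi_integral_Ioi_eq_toReal (by fun_prop) (fun _ _ ↦ (exp_pos _).le) h

theorem xiInt_le (hk : 0 < k) (ha : 0 < a) (hb : 0 ≤ b) :
    xiInt k a b ≤ Gamma (2 / k) * (k ! : ℝ) ^ ((2 : ℝ) / k) / k * a ^ (-(2 : ℝ) / k) := by
  have h := xiLIntegral_le hk ha hb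
  have hfin := ne_top_of_le_ne_top ENNReal.ofReal_ne_top h
  rw [xiInt_eq_toReal_xiLIntegral hfin]
  exact (ENNReal.le_ofReal_iff_toReal_le hfin (by positivity)).mp h

theorem le_xiInt (hk : 0 < k) (ha : 0 < a) (hb : 0 ≤ b) :
    Gamma (2 / k) * (k ! : ℝ) ^ ((2 : ℝ) / k) / k * (a + b) ^ (-(2 : ℝ) / k) ≤ xiInt k a b := by
  have hfin := ne_top_of_le_ne_top ENNReal.ofReal_ne_top (xiLIntegral_le hk ha hb)
  rw [xiInt_eq_toReal_xiLIntegral hfin]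
  exact (ENNReal.ofReal_le_iff_le_toReal hfin).mp (ofReal_le_xiLIntegral hk (by linarith) hb)

end Xi

theorem stmt4 (k : ℕ) (hk : 2 ≤ k) (a b : ℝ) (ha : 0 < a) (hb : 0 < b) :
    (a + b) ^ (-(2 : ℝ) / k)
        ≤ (k : ℝ) / (Real.Gamma (2 / k) * (Nat.factorial k : ℝ) ^ ((2 : ℝ) / k)) * xiInt k a b
      ∧ (k : ℝ) / (Real.Gamma (2 / k) * (Nat.factorial k : ℝ) ^ ((2 : ℝ) / k)) * xiInt k a b
        ≤ a ^ (-(2 : ℝ) / k) + b ^ (-(2 : ℝ) / k) := by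
  have hk0 : 0 < k := by omega
  have hΓ : 0 < Gamma (2 / k) := Gamma_pos_of_pos (by positivity)
  set N := (k : ℝ) / (Gamma (2 / k) * (k ! : ℝ) ^ ((2 : ℝ) / k))
  have hN : 0 ≤ N := by positivity
  have hnormalize : ∀ t, N * (Gamma (2 / k) * (k ! : ℝ) ^ ((2 : ℝ) / k) / k * t) = t := by
    intro t
    simp only [N]
    field_simp
  constructor
  · calc (a + b) ^ (-(2 : ℝ) / k)
        = N * (Gamma (2 / k) * (k ! : ℝ) ^ ((2 : ℝ) / k) / k * (a + b) ^ (-(2 : ℝ) / k)) :=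
          (hnormalize _).symm
      _ ≤ N * xiInt k a b := mul_le_mul_of_nonneg_left (le_xiInt hk0 ha hb.le) hN
  · calc N * xiInt k a b
        ≤ N * (Gamma (2 / k) * (k ! : ℝ) ^ ((2 : ℝ) / k) / k * a ^ (-(2 : ℝ) / k)) :=
          mul_le_mul_of_nonneg_left (xiInt_le hk0 ha hb.le) hN
      _ = a ^ (-(2 : ℝ) / k) := hnormalize _
      _ ≤ a ^ (-(2 : ℝ) / k) + b ^ (-(2 : ℝ) / k) := le_add_of_nonneg_right (by positivity)
end

section
/- ∫_0^1 ∫_0^{1-s} (arctan(√(t/s)) / √(st)) dt ds = π²/4. -/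
/-!
Write θ = arccos √s, so that √((1 - s)/s) = tan θ. The primitive 2√x arctan √x - log (1 + x) of
arctan √x / √x, taken at x = (1 - s)/s, turns the inner integral into 2θ tan θ + log s, and
2θ√(s(1 - s)) - θ² + s log s is a primitive of that on (0, 1), rising by π²/4 from s = 0 to s = 1.
Both integrands are nonnegative, which makes them integrable, so the fundamental theorem of calculus
applies without further estimates.
-/

open MeasureTheory Real Set

theorem integral_Ioo_eq_sub_of_hasDerivAt_of_nonneg {f f' : ℝ → ℝ} {a b : ℝ} (hab : a ≤ b)
    (hcont : ContinuousOn f (Icc a b)) (hderiv : ∀ x ∈ Ioo a b, HasDerivAt f (f' x) x)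
    (hnonneg : ∀ x ∈ Ioo a b, 0 ≤ f' x) :
    ∫ x in Ioo a b, f' x = f b - f a := by
  rw [← integral_Ioc_eq_integral_Ioo, ← intervalIntegral.integral_of_le hab]
  exact intervalIntegral.integral_eq_sub_of_hasDerivAt_of_le hab hcont hderiv
    ((intervalIntegrable_iff_integrableOn_Ioc_of_le hab).2
      (intervalIntegral.integrableOn_deriv_of_nonneg hcont hderiv hnonneg))

theorem hasDerivAt_two_mul_sqrt_mul_arctan_sqrt_sub_log {x : ℝ} (hx : 0 < x) :
    HasDerivAt (fun y => 2 * (√y * arctan √y) - log (1 + y)) (arctan √x / √x) x := by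
  have hsqrt := hasDerivAt_sqrt hx.ne'
  refine (((hsqrt.mul hsqrt.arctan).const_mul 2).sub
    (((hasDerivAt_id' x).const_add 1).log (by positivity))).congr_deriv ?_
  have : 0 < √x := sqrt_pos.2 hx
  field_simp
  rw [sq_sqrt hx.le]
  ring

theorem integral_arctan_sqrt_div_div_sqrt_mul {s c : ℝ} (hs : 0 < s) (hc : 0 ≤ c) :
    ∫ t in Ioo 0 c, arctan √(t / s) / √(s * t) =
      2 * (√(c / s) * arctan √(c / s)) - log (1 + c / s) := by
  have hF := integral_Ioo_eq_sub_of_hasDerivAt_of_nonneg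
    (f := fun t => 2 * (√(t / s) * arctan √(t / s)) - log (1 + t / s))
    (f' := fun t => arctan √(t / s) / √(s * t)) hc ?_ ?_ ?_
  · simpa using hF
  · refine ContinuousOn.sub (by fun_prop) (ContinuousOn.log (by fun_prop) fun t ht => ?_)
    have : 0 ≤ t / s := div_nonneg ht.1 hs.le
    positivity
  · intro t ht
    have ht0 : 0 < t := ht.1
    refine ((hasDerivAt_two_mul_sqrt_mul_arctan_sqrt_sub_log (div_pos ht0 hs)).comp t
      ((hasDerivAt_id t).div_const s)).congr_deriv ?_
    rw [sqrt_div' _ hs.le, sqrt_mul hs.le]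
    have : 0 < √s := sqrt_pos.2 hs
    have : 0 < √t := sqrt_pos.2 ht0
    field_simp
    rw [sq_sqrt hs.le]
  · intro t _
    exact div_nonneg (arctan_nonneg.2 (sqrt_nonneg _)) (sqrt_nonneg _)

theorem arccos_sqrt_eq_arctan_sqrt {s : ℝ} (hs : 0 < s) : arccos √s = arctan √((1 - s) / s) := by
  rw [arccos_eq_arctan (sqrt_pos.2 hs), sq_sqrt hs.le, sqrt_div' _ hs.le]

theorem hasDerivAt_arccos_sqrt_primitive {s : ℝ} (hs0 : 0 < s) (hs1 : s < 1) :
    HasDerivAt (fun x => 2 * (arccos √x * √(x * (1 - x))) - arccos √x ^ 2 + x * log x)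
      (2 * (arccos √s * √((1 - s) / s)) + log s) s := by
  have ha : 0 < √s := sqrt_pos.2 hs0
  have hb : 0 < √(1 - s) := sqrt_pos.2 (sub_pos.2 hs1)
  have ha1 : √s < 1 := (sqrt_lt' one_pos).2 (by simpa using hs1)
  have hθ : HasDerivAt (fun x => arccos √x) (-(1 / √(1 - √s ^ 2)) * (1 / (2 * √s))) s :=
    (hasDerivAt_arccos (by linarith) ha1.ne).comp s (hasDerivAt_sqrt hs0.ne')
  have hw : HasDerivAt (fun x => √(x * (1 - x))) ((1 - 2 * s) / (2 * √(s * (1 - s)))) s :=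
    (((hasDerivAt_id' s).mul ((hasDerivAt_id' s).const_sub 1)).congr_deriv (by ring)).sqrt
      (mul_pos hs0 (sub_pos.2 hs1)).ne'
  refine ((((hθ.mul hw).const_mul 2).sub (hθ.pow 2)).add
    (hasDerivAt_mul_log hs0.ne')).congr_deriv ?_
  have h1s : √(1 - s) ^ 2 = 1 - s := sq_sqrt (sub_pos.2 hs1).le
  rw [sq_sqrt hs0.le, sqrt_mul hs0.le, sqrt_div' _ hs0.le]
  generalize arccos √s = θ
  field_simp
  simp only [Nat.cast_ofNat, Nat.add_one_sub_one, pow_one]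
  linear_combination (-4 * θ) * h1s

theorem stmt6 :
    (∫ s in Set.Ioo (0 : ℝ) 1, ∫ t in Set.Ioo (0 : ℝ) (1 - s),
        Real.arctan (Real.sqrt (t / s)) / Real.sqrt (s * t))
      = π ^ 2 / 4 := by
  have hinner : ∀ s ∈ Ioo (0 : ℝ) 1, ∫ t in Ioo 0 (1 - s), arctan √(t / s) / √(s * t) =
      2 * (arccos √s * √((1 - s) / s)) + log s := by
    rintro s ⟨hs0, hs1⟩
    rw [integral_arctan_sqrt_div_div_sqrt_mul hs0 (sub_nonneg.2 hs1.le),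
      arccos_sqrt_eq_arctan_sqrt hs0, one_add_div hs0.ne', add_sub_cancel, one_div, log_inv]
    ring
  have hcont : ContinuousOn
      (fun x => 2 * (arccos √x * √(x * (1 - x))) - arccos √x ^ 2 + x * log x) (Icc 0 1) :=
    ((by fun_prop : Continuous fun x => 2 * (arccos √x * √(x * (1 - x))) - arccos √x ^ 2).add
      continuous_mul_log).continuousOn
  rw [integral_Ioo_eq_sub_of_hasDerivAt_of_nonneg zero_le_one hcont
    (fun s hs => hinner s hs ▸ hasDerivAt_arccos_sqrt_primitive hs.1 hs.2)
    (fun s _ => setIntegral_nonneg measurableSet_Ioo fun t _ =>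
      div_nonneg (arctan_nonneg.2 (sqrt_nonneg _)) (sqrt_nonneg _))]
  norm_num [div_pow]
end

section
/- For every integer k ≥ 3, ∫_0^∞ (w+1)^{2/k - 2} F(2/k, 1/k; 1 + 1/k; -w) dw = π cot(π/k) / (k-2). -/
open MeasureTheory Real Set

/-- The Gauss hypergeometric function `₂F₁(a, b; c; z)`, given (for `c > b > 0` and `z < 1`)
by Euler's integral representation. -/
noncomputable def hypF (a b c z : ℝ) : ℝ :=
  (Real.Gamma c / (Real.Gamma b * Real.Gamma (c - b))) *
    ∫ t in Set.Ioo (0 : ℝ) 1, t ^ (b - 1) * (1 - t) ^ (c - b - 1) * (1 - z * t) ^ (-a)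

/-!
Put `x = 1/k`. Euler's integral gives `F(2x, x; 1 + x; -w) = x ∫₀¹ t^(x-1) (1 + tw)^(-2x) dt`,
and after exchanging the two integrals (everything is nonnegative) the `w`-integral is elementary:
`∫₀^∞ (1 + w)^(2x-2) (1 + tw)^(-2x) dw = (1 - t^(1-2x)) / ((1 - 2x)(1 - t))`.
What is left is `x / (1 - 2x) · ∫₀¹ (t^(x-1) - t^(-x)) / (1 - t) dt`, and this integral equals
`ψ(1 - x) - ψ(x) = π cot(πx)`: with the extra factor `(1 - t)^ε` it is a difference of two Beta
integrals, whose limit as `ε → 0⁺` is that difference of logarithmic derivatives of `Γ`,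
computed by differentiating the reflection formula `Γ(x) Γ(1 - x) = π / sin(πx)`.
-/

open Filter Topology Function

lemma ofReal_rpow_mul_one_sub_rpow {a b t : ℝ} (ht₀ : 0 ≤ t) (ht₁ : t ≤ 1) :
    ((t ^ (a - 1) * (1 - t) ^ (b - 1) : ℝ) : ℂ)
      = (t : ℂ) ^ ((a : ℂ) - 1) * (1 - (t : ℂ)) ^ ((b : ℂ) - 1) := by
  rw [Complex.ofReal_mul, Complex.ofReal_cpow ht₀, Complex.ofReal_cpow (sub_nonneg.mpr ht₁)]
  push_cast
  rfl

lemma betaIntegral_ofReal (a b : ℝ) :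
    Complex.betaIntegral a b
      = ((∫ t in Ioo (0 : ℝ) 1, t ^ (a - 1) * (1 - t) ^ (b - 1) : ℝ) : ℂ) := by
  rw [Complex.betaIntegral, ← integral_Ioc_eq_integral_Ioo,
    ← intervalIntegral.integral_of_le zero_le_one, ← intervalIntegral.integral_ofReal]
  refine intervalIntegral.integral_congr fun t ht ↦ ?_
  rw [uIcc_of_le zero_le_one] at ht
  exact (ofReal_rpow_mul_one_sub_rpow ht.1 ht.2).symm

lemma integrableOn_rpow_mul_one_sub_rpow {a b : ℝ} (ha : 0 < a) (hb : 0 < b) :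
    IntegrableOn (fun t : ℝ ↦ t ^ (a - 1) * (1 - t) ^ (b - 1)) (Ioo 0 1) := by
  have h := Complex.betaIntegral_convergent (u := a) (v := b) (by simpa) (by simpa)
  rw [intervalIntegrable_iff_integrableOn_Ioo_of_le zero_le_one] at h
  refine (integrableOn_congr_fun (fun t ht ↦ ?_) measurableSet_Ioo).mp h.re
  simp [← ofReal_rpow_mul_one_sub_rpow ht.1.le ht.2.le]

lemma integral_rpow_mul_one_sub_rpow {a b : ℝ} (ha : 0 < a) (hb : 0 < b) :
    ∫ t in Ioo (0 : ℝ) 1, t ^ (a - 1) * (1 - t) ^ (b - 1)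
      = Gamma a * Gamma b / Gamma (a + b) := by
  have h := Complex.betaIntegral_eq_Gamma_mul_div a b (by simpa) (by simpa)
  rw [betaIntegral_ofReal, ← Complex.ofReal_add, Complex.Gamma_ofReal, Complex.Gamma_ofReal,
    Complex.Gamma_ofReal] at h
  exact_mod_cast h

lemma hypF_one_add (a : ℝ) {b : ℝ} (hb : 0 < b) (z : ℝ) :
    hypF a b (1 + b) z = b * ∫ t in Ioo (0 : ℝ) 1, t ^ (b - 1) * (1 - z * t) ^ (-a) := by
  simp only [hypF, add_sub_cancel_right, sub_self, rpow_zero, mul_one, Gamma_one]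
  rw [add_comm, Gamma_add_one hb.ne', mul_div_cancel_right₀ _ (Gamma_pos_of_pos hb).ne']

lemma differentiableAt_Gamma_of_pos {s : ℝ} (hs : 0 < s) : DifferentiableAt ℝ Gamma s :=
  differentiableAt_Gamma fun m hm ↦ by linarith [hm ▸ hs, (Nat.cast_nonneg m : (0 : ℝ) ≤ m)]

lemma logDeriv_Gamma_one_sub_sub_logDeriv_Gamma {x : ℝ} (hx₀ : 0 < x) (hx₁ : x < 1) :
    logDeriv Gamma (1 - x) - logDeriv Gamma x = π * cot (π * x) := by
  have h1x : 0 < 1 - x := by linarith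
  have hsin : sin (π * x) ≠ 0 :=
    (sin_pos_of_pos_of_lt_pi (by positivity) (by nlinarith [pi_pos])).ne'
  have hreflect := congrArg (logDeriv · x)
    (funext Gamma_mul_Gamma_one_sub : (fun s ↦ Gamma s * Gamma (1 - s)) = fun s ↦ π / sin (π * s))
  have hGamma_one_sub : logDeriv (fun s ↦ Gamma (1 - s)) x = -logDeriv Gamma (1 - x) := by
    rw [show (fun s ↦ Gamma (1 - s)) = Gamma ∘ (fun s ↦ 1 - s) from rfl,
      logDeriv_comp (differentiableAt_Gamma_of_pos h1x) (by fun_prop)]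
    simp
  have hsin_mul : logDeriv (fun s ↦ sin (π * s)) x = cot (π * x) * π := by
    rw [show (fun s ↦ sin (π * s)) = sin ∘ (fun s ↦ π * s) from rfl,
      logDeriv_comp differentiableAt_sin (by fun_prop), Real.logDeriv_sin]
    simp
  rw [logDeriv_mul (f := Gamma) (g := fun s ↦ Gamma (1 - s)) x (Gamma_pos_of_pos hx₀).ne'
      (Gamma_pos_of_pos h1x).ne' (differentiableAt_Gamma_of_pos hx₀)
      ((differentiableAt_Gamma_of_pos h1x).comp x (by fun_prop)),
    logDeriv_div (f := fun _ ↦ π) (g := fun s ↦ sin (π * s)) x pi_ne_zero hsin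
      (by fun_prop) (by fun_prop),
    logDeriv_const, hGamma_one_sub, hsin_mul] at hreflect
  simp only [Pi.zero_apply] at hreflect
  linarith

lemma hasDerivAt_Gamma_div_Gamma_add {a : ℝ} (ha : 0 < a) :
    HasDerivAt (fun ε ↦ Gamma a / Gamma (a + ε)) (-logDeriv Gamma a) 0 := by
  have hΓ : HasDerivAt (fun ε ↦ Gamma (a + ε)) (deriv Gamma a) 0 :=
    HasDerivAt.comp_const_add a 0 (by simpa using (differentiableAt_Gamma_of_pos ha).hasDerivAt)
  refine ((hasDerivAt_const 0 (Gamma a)).fun_div hΓ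
    (by simpa using (Gamma_pos_of_pos ha).ne')).congr_deriv ?_
  rw [logDeriv_apply, add_zero]
  field_simp
  ring

lemma tendsto_Gamma_mul_Gamma_div_sub {a b : ℝ} (ha : 0 < a) (hb : 0 < b) :
    Tendsto (fun ε ↦ Gamma a * Gamma ε / Gamma (a + ε) - Gamma b * Gamma ε / Gamma (b + ε))
      (𝓝[>] 0) (𝓝 (logDeriv Gamma b - logDeriv Gamma a)) := by
  have hderiv := (hasDerivAt_Gamma_div_Gamma_add ha).fun_sub (hasDerivAt_Gamma_div_Gamma_add hb)
  have hΓ : Tendsto (fun ε ↦ Gamma (ε + 1)) (𝓝[>] 0) (𝓝 1) := by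
    have := (differentiableAt_Gamma_of_pos one_pos).continuousAt.tendsto.comp
      ((continuous_add_const (1 : ℝ)).tendsto' 0 1 (zero_add 1))
    simpa [Gamma_one, comp_def] using this.mono_left nhdsWithin_le_nhds
  -- `ε Γ(ε) = Γ(ε + 1)` turns the Beta difference into a difference quotient at `0`.
  refine (tendsto_nhdsWithin_congr (fun ε (hε : 0 < ε) ↦ ?_)
    (hΓ.mul hderiv.tendsto_slope_zero_right)).trans (by rw [one_mul, neg_sub_neg])
  simp only [smul_eq_mul, add_zero, zero_add, div_self (Gamma_pos_of_pos ha).ne',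
    div_self (Gamma_pos_of_pos hb).ne', Gamma_add_one hε.ne']
  field_simp
  ring

lemma integral_eq_of_tendsto_integral_of_monotone {α : Type*} [MeasurableSpace α]
    {μ : Measure α} {f : ℕ → α → ℝ} {F : α → ℝ} {L : ℝ} (hf : ∀ n, Integrable (f n) μ)
    (hf₀ : 0 ≤ᵐ[μ] f 0) (h_mono : ∀ᵐ x ∂μ, Monotone fun n ↦ f n x)
    (h_tendsto : ∀ᵐ x ∂μ, Tendsto (fun n ↦ f n x) atTop (𝓝 (F x)))
    (hL : Tendsto (fun n ↦ ∫ x, f n x ∂μ) atTop (𝓝 L)) :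
    ∫ x, F x ∂μ = L := by
  have hf_nonneg (n : ℕ) : 0 ≤ᵐ[μ] f n := by
    filter_upwards [hf₀, h_mono] with x h₀ hx using h₀.trans (hx n.zero_le)
  have hF_nonneg : 0 ≤ᵐ[μ] F := by
    filter_upwards [hf₀, h_mono, h_tendsto] with x h₀ hx hxF
    exact h₀.trans (ge_of_tendsto' hxF fun n ↦ hx n.zero_le)
  have hlintegral : ∫⁻ x, ENNReal.ofReal (F x) ∂μ = ENNReal.ofReal L := by
    refine tendsto_nhds_unique (lintegral_tendsto_of_tendsto_of_monotone
      (fun n ↦ (hf n).aemeasurable.ennreal_ofReal) ?_ ?_) ?_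
    · filter_upwards [h_mono] with x hx n m hnm using ENNReal.ofReal_le_ofReal (hx hnm)
    · filter_upwards [h_tendsto] with x hx using (ENNReal.continuous_ofReal.tendsto _).comp hx
    · simp_rw [← ofReal_integral_eq_lintegral_ofReal (hf _) (hf_nonneg _)]
      exact (ENNReal.continuous_ofReal.tendsto L).comp hL
  rw [integral_eq_lintegral_of_nonneg_ae hF_nonneg
    (aestronglyMeasurable_of_tendsto_ae atTop (fun n ↦ (hf n).1) h_tendsto), hlintegral,
    ENNReal.toReal_ofReal (ge_of_tendsto' hL fun n ↦ integral_nonneg_of_ae (hf_nonneg n))]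

lemma integral_rpow_sub_rpow_div_one_sub {x : ℝ} (hx₀ : 0 < x) (hx : x ≤ 1 / 2) :
    ∫ t in Ioo (0 : ℝ) 1, (t ^ (x - 1) - t ^ (-x)) / (1 - t) = π * cot (π * x) := by
  have h1x : 0 < 1 - x := by linarith
  have hexp : 1 - x - 1 = -x := by ring
  have hint {ε : ℝ} (hε : 0 < ε) :
      IntegrableOn (fun t : ℝ ↦ (t ^ (x - 1) - t ^ (-x)) * (1 - t) ^ (ε - 1)) (Ioo 0 1) := by
    have h := (integrableOn_rpow_mul_one_sub_rpow hx₀ hε).sub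
      (integrableOn_rpow_mul_one_sub_rpow h1x hε)
    rw [hexp] at h
    exact h.congr_fun (fun t _ ↦ by simp only [Pi.sub_apply]; ring) measurableSet_Ioo
  have hval {ε : ℝ} (hε : 0 < ε) :
      ∫ t in Ioo (0 : ℝ) 1, (t ^ (x - 1) - t ^ (-x)) * (1 - t) ^ (ε - 1)
        = Gamma x * Gamma ε / Gamma (x + ε) - Gamma (1 - x) * Gamma ε / Gamma (1 - x + ε) := by
    rw [← integral_rpow_mul_one_sub_rpow hx₀ hε, ← integral_rpow_mul_one_sub_rpow h1x hε, hexp,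
      ← integral_sub (integrableOn_rpow_mul_one_sub_rpow hx₀ hε)
        (hexp ▸ integrableOn_rpow_mul_one_sub_rpow h1x hε)]
    exact setIntegral_congr_fun measurableSet_Ioo fun t _ ↦ by ring
  have hnum_nonneg {t : ℝ} (ht : t ∈ Ioo (0 : ℝ) 1) : 0 ≤ t ^ (x - 1) - t ^ (-x) :=
    sub_nonneg.mpr (rpow_le_rpow_of_exponent_ge ht.1 ht.2.le (by linarith))
  have hε (n : ℕ) : (0 : ℝ) < 1 / (n + 1) := by positivity
  refine integral_eq_of_tendsto_integral_of_monotone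
    (f := fun n (t : ℝ) ↦ (t ^ (x - 1) - t ^ (-x)) * (1 - t) ^ (1 / (n + 1 : ℝ) - 1))
    (fun n ↦ hint (hε n)) ?_ ?_ ?_ ?_
  · filter_upwards [ae_restrict_mem measurableSet_Ioo] with t ht
    exact mul_nonneg (hnum_nonneg ht) (rpow_nonneg (by linarith [ht.2]) _)
  · filter_upwards [ae_restrict_mem measurableSet_Ioo] with t ht n m hnm
    refine mul_le_mul_of_nonneg_left (rpow_le_rpow_of_exponent_ge (by linarith [ht.2])
      (by linarith [ht.1]) ?_) (hnum_nonneg ht)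
    gcongr
  · filter_upwards [ae_restrict_mem measurableSet_Ioo] with t ht
    rw [div_eq_mul_inv, ← rpow_neg_one]
    refine tendsto_const_nhds.mul (tendsto_const_nhds.rpow ?_ (Or.inl (by linarith [ht.2])))
    simpa using tendsto_one_div_add_atTop_nhds_zero_nat.sub_const (1 : ℝ)
  · simp_rw [hval (hε _)]
    rw [← logDeriv_Gamma_one_sub_sub_logDeriv_Gamma hx₀ (by linarith)]
    exact (tendsto_Gamma_mul_Gamma_div_sub hx₀ h1x).comp
      (tendsto_nhdsWithin_of_tendsto_nhds_of_eventually_within _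
        tendsto_one_div_add_atTop_nhds_zero_nat (Eventually.of_forall hε))

section AddOneRpow

variable {a t : ℝ}

lemma hasDerivAt_add_one_rpow_mul_mul_add_one_rpow (ha : a ≠ 1) (ht₀ : 0 ≤ t) (ht₁ : t ≠ 1)
    {w : ℝ} (hw : 0 ≤ w) :
    HasDerivAt (fun w ↦ (w + 1) ^ (a - 1) * (t * w + 1) ^ (1 - a) / ((a - 1) * (1 - t)))
      ((w + 1) ^ (a - 2) * (t * w + 1) ^ (-a)) w := by
  have hw₁ : 0 < w + 1 := by linarith
  have htw : 0 < t * w + 1 := by positivity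
  have hu := ((hasDerivAt_id w).add_const 1).rpow_const (p := a - 1) (Or.inl hw₁.ne')
  have hv := (((hasDerivAt_id w).const_mul t).add_const 1).rpow_const (p := 1 - a)
    (Or.inl htw.ne')
  refine ((hu.mul hv).div_const _).congr_deriv ?_
  have hu_split : (w + 1) ^ (a - 1) = (w + 1) ^ (a - 2) * (w + 1) := by
    rw [← rpow_add_one hw₁.ne']; ring_nf
  have hv_split : (t * w + 1) ^ (1 - a) = (t * w + 1) ^ (-a) * (t * w + 1) := by
    rw [← rpow_add_one htw.ne']; ring_nf
  simp only [id, show a - 1 - 1 = a - 2 by ring, show 1 - a - 1 = -a by ring, hu_split, hv_split]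
  have ha' : a - 1 ≠ 0 := sub_ne_zero.mpr ha
  have ht' : 1 - t ≠ 0 := sub_ne_zero.mpr ht₁.symm
  field_simp
  ring

lemma tendsto_add_one_rpow_mul_mul_add_one_rpow (ht₀ : 0 < t) :
    Tendsto (fun w ↦ (w + 1) ^ (a - 1) * (t * w + 1) ^ (1 - a) / ((a - 1) * (1 - t))) atTop
      (𝓝 (t ^ (1 - a) / ((a - 1) * (1 - t)))) := by
  have hratio : Tendsto (fun w : ℝ ↦ (t * w + 1) / (w + 1)) atTop (𝓝 t) := by
    have h := (tendsto_inv_atTop_zero.comp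
      (tendsto_atTop_add_const_right _ 1 tendsto_id)).const_mul (1 - t) |>.const_add t
    rw [mul_zero, add_zero] at h
    refine h.congr' ?_
    filter_upwards [eventually_gt_atTop 0] with w hw
    simp only [comp_apply, id]
    field_simp
    ring
  refine (((hratio.rpow_const (Or.inl ht₀.ne')).div_const _)).congr' ?_
  filter_upwards [eventually_gt_atTop 0] with w hw
  rw [div_rpow (by positivity) (by positivity), show a - 1 = -(1 - a) by ring,
    rpow_neg (by positivity)]
  ring

lemma integrableOn_Ioi_add_one_rpow_mul_mul_add_one_rpow (ha : a ≠ 1) (ht₀ : 0 < t)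
    (ht₁ : t ≠ 1) :
    IntegrableOn (fun w ↦ (w + 1) ^ (a - 2) * (t * w + 1) ^ (-a)) (Ioi 0) :=
  integrableOn_Ioi_deriv_of_nonneg
    (hasDerivAt_add_one_rpow_mul_mul_add_one_rpow ha ht₀.le ht₁
      le_rfl).continuousAt.continuousWithinAt
    (fun _ hw ↦ hasDerivAt_add_one_rpow_mul_mul_add_one_rpow ha ht₀.le ht₁ (le_of_lt hw))
    (fun w (hw : 0 < w) ↦ by positivity) (tendsto_add_one_rpow_mul_mul_add_one_rpow ht₀)

lemma integral_Ioi_add_one_rpow_mul_mul_add_one_rpow (ha : a ≠ 1) (ht₀ : 0 < t) (ht₁ : t ≠ 1) :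
    ∫ w in Ioi 0, (w + 1) ^ (a - 2) * (t * w + 1) ^ (-a)
      = (1 - t ^ (1 - a)) / ((1 - a) * (1 - t)) := by
  rw [integral_Ioi_of_hasDerivAt_of_nonneg
    (hasDerivAt_add_one_rpow_mul_mul_add_one_rpow ha ht₀.le ht₁
      le_rfl).continuousAt.continuousWithinAt
    (fun _ hw ↦ hasDerivAt_add_one_rpow_mul_mul_add_one_rpow ha ht₀.le ht₁ (le_of_lt hw))
    (fun w (hw : 0 < w) ↦ by positivity) (tendsto_add_one_rpow_mul_mul_add_one_rpow ht₀)]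
  have ha' : 1 - a ≠ 0 := sub_ne_zero.mpr ha.symm
  have ht' : 1 - t ≠ 0 := sub_ne_zero.mpr ht₁.symm
  simp only [mul_zero, zero_add, one_rpow, one_mul]
  field_simp
  ring

end AddOneRpow

section Tonelli

variable {α β : Type*} [MeasurableSpace α] [MeasurableSpace β] {μ : Measure α} {ν : Measure β}
  [SFinite ν] {F : α → β → ℝ}

lemma integral_integral_eq_toReal_lintegral_lintegral (hF : Measurable (uncurry F))
    (hF₀ : ∀ᵐ x ∂μ, ∀ᵐ y ∂ν, 0 ≤ F x y) (hF_int : ∀ᵐ x ∂μ, Integrable (F x) ν) :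
    ∫ x, ∫ y, F x y ∂ν ∂μ = (∫⁻ x, ∫⁻ y, ENNReal.ofReal (F x y) ∂ν ∂μ).toReal := by
  rw [integral_eq_lintegral_of_nonneg_ae
    (by filter_upwards [hF₀] with x hx using integral_nonneg_of_ae hx)
    (hF.stronglyMeasurable.integral_prod_right (f := F)).aestronglyMeasurable]
  congr 1
  refine lintegral_congr_ae ?_
  filter_upwards [hF₀, hF_int] with x hx hx_int using ofReal_integral_eq_lintegral_ofReal hx_int hx

lemma integral_integral_swap_of_nonneg [SFinite μ] (hF : Measurable (uncurry F))
    (hF₀ : ∀ᵐ x ∂μ, ∀ᵐ y ∂ν, 0 ≤ F x y) (hF_int : ∀ᵐ x ∂μ, Integrable (F x) ν)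
    (hF_int' : ∀ᵐ y ∂ν, Integrable (fun x ↦ F x y) μ) :
    ∫ x, ∫ y, F x y ∂ν ∂μ = ∫ y, ∫ x, F x y ∂μ ∂ν := by
  have hF₀' := (Measure.ae_ae_comm (p := fun x y ↦ 0 ≤ F x y)
    (measurableSet_le measurable_const hF)).mp hF₀
  rw [integral_integral_eq_toReal_lintegral_lintegral hF hF₀ hF_int,
    integral_integral_eq_toReal_lintegral_lintegral (F := fun y x ↦ F x y)
      (hF.comp measurable_swap) hF₀' hF_int',
    lintegral_lintegral_swap hF.ennreal_ofReal.aemeasurable]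

end Tonelli

lemma integral_add_one_rpow_mul_hypF {x : ℝ} (hx₀ : 0 < x) (hx : x < 1 / 2) :
    ∫ w in Ioi (0 : ℝ), (w + 1) ^ (2 * x - 2) * hypF (2 * x) x (1 + x) (-w)
      = x / (1 - 2 * x) * (π * cot (π * x)) := by
  set K : ℝ → ℝ → ℝ :=
    fun w t ↦ t ^ (x - 1) * ((w + 1) ^ (2 * x - 2) * (t * w + 1) ^ (-(2 * x)))
  have h2x : 2 * x ≠ 1 := by linarith
  have hK_meas : Measurable (uncurry K) := by fun_prop
  have hK_int_t {w : ℝ} (hw : 0 < w) : IntegrableOn (K w) (Ioo 0 1) := by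
    refine ((intervalIntegral.integrableOn_Ioo_rpow_iff (s := x - 1) one_pos).mpr
      (by linarith)).const_mul ((w + 1) ^ (2 * x - 2))
      |>.mono' (hK_meas.comp measurable_prodMk_left).aestronglyMeasurable ?_
    filter_upwards [ae_restrict_mem measurableSet_Ioo] with t ht
    have hdecay : (t * w + 1) ^ (-(2 * x)) ≤ 1 :=
      rpow_le_one_of_one_le_of_nonpos (by nlinarith [ht.1]) (by linarith)
    rw [Real.norm_of_nonneg (by have := ht.1; positivity)]
    calc K w t = (w + 1) ^ (2 * x - 2) * t ^ (x - 1) * (t * w + 1) ^ (-(2 * x)) := by ring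
      _ ≤ (w + 1) ^ (2 * x - 2) * t ^ (x - 1) * 1 := by have := ht.1; gcongr
      _ = _ := mul_one _
  have hK_int_w {t : ℝ} (ht : t ∈ Ioo (0 : ℝ) 1) : IntegrableOn (fun w ↦ K w t) (Ioi 0) :=
    (integrableOn_Ioi_add_one_rpow_mul_mul_add_one_rpow h2x ht.1 ht.2.ne).const_mul _
  calc ∫ w in Ioi (0 : ℝ), (w + 1) ^ (2 * x - 2) * hypF (2 * x) x (1 + x) (-w)
      = ∫ w in Ioi (0 : ℝ), x * ∫ t in Ioo (0 : ℝ) 1, K w t := by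
        refine setIntegral_congr_fun measurableSet_Ioi fun w _ ↦ ?_
        rw [hypF_one_add _ hx₀, mul_left_comm, ← integral_const_mul]
        congr 1
        refine setIntegral_congr_fun measurableSet_Ioo fun t _ ↦ ?_
        simp only [K]
        ring_nf
    _ = x * ∫ t in Ioo (0 : ℝ) 1, ∫ w in Ioi (0 : ℝ), K w t := by
        rw [integral_const_mul, integral_integral_swap_of_nonneg hK_meas]
        · filter_upwards [ae_restrict_mem measurableSet_Ioi] with w (hw : 0 < w)
          filter_upwards [ae_restrict_mem measurableSet_Ioo] with t ht
          have := ht.1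
          positivity
        · filter_upwards [ae_restrict_mem measurableSet_Ioi] with w hw using hK_int_t hw
        · filter_upwards [ae_restrict_mem measurableSet_Ioo] with t ht using hK_int_w ht
    _ = x * ∫ t in Ioo (0 : ℝ) 1, (t ^ (x - 1) - t ^ (-x)) / (1 - t) / (1 - 2 * x) := by
        congr 1
        refine setIntegral_congr_fun measurableSet_Ioo fun t ht ↦ ?_
        have hpow : t ^ (x - 1) * t ^ (1 - 2 * x) = t ^ (-x) := by
          rw [← rpow_add ht.1]; ring_nf
        have h1t : 1 - t ≠ 0 := by linarith [ht.2]
        have h12x : 1 - 2 * x ≠ 0 := by linarith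
        rw [integral_const_mul, integral_Ioi_add_one_rpow_mul_mul_add_one_rpow h2x ht.1 ht.2.ne,
          ← hpow]
        field_simp
    _ = x / (1 - 2 * x) * (π * cot (π * x)) := by
        rw [integral_div, integral_rpow_sub_rpow_div_one_sub hx₀ hx.le]
        ring

theorem stmt8 (k : ℕ) (hk : 3 ≤ k) :
    (∫ w in Set.Ioi (0 : ℝ),
        (w + 1) ^ ((2 : ℝ) / k - 2) * hypF (2 / k) (1 / k) (1 + 1 / k) (-w))
      = π * Real.cot (π / k) / ((k : ℝ) - 2) := by
  have hk₂ : (2 : ℝ) < k := by exact_mod_cast hk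
  have hk₀ : (0 : ℝ) < k := by linarith
  rw [show (2 : ℝ) / k - 2 = 2 * (1 / k) - 2 by ring, show (2 : ℝ) / k = 2 * (1 / k) by ring,
    integral_add_one_rpow_mul_hypF (by positivity)
      ((div_lt_div_iff₀ hk₀ two_pos).mpr (by linarith)),
    mul_one_div]
  have hk_sub : (k : ℝ) - 2 ≠ 0 := by linarith
  field_simp
end

section
/- For k = 2, the expected number of one-records on a path of n nodes, E[X_{n,1}] = Σ_{i=0}^{n-1} ∫_0^∞ e^{-x} (Γ(2,x)/Γ(2))^i dx, satisfies E[X_{n,1}] ~ √(2πn) as n → ∞. -/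
/-!
Write `a n = ∫₀^∞ e^{-x} ((1 + x) e^{-x})^n dx`. Since `(1 + x) e^{-x} = exp (log (1 + x) - x)` and
`log (1 + x) - x ≈ -x²/2`, the substitution `x = y/√n` and dominated convergence give
`√n · a n → ∫₀^∞ e^{-y²/2} dy = √(2π)/2`, i.e. `a n ~ √(2π) (√(n+1) - √n)`. Summing an asymptotic
equivalence with nonnegative, divergent right-hand side preserves it, and the right-hand side
telescopes to `√(2πn)`.
-/

open MeasureTheory Real Set Filter Topology Asymptotics

theorem Real.log_one_add_sub_self_le {t : ℝ} (ht : 0 ≤ t) :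
    log (1 + t) - t ≤ -(t ^ 2 / (4 * (1 + t))) := by
  have hs : √(1 + t) ^ 2 = 1 + t := sq_sqrt (by linarith)
  have hs1 : 1 ≤ √(1 + t) := by simpa using sqrt_le_sqrt (by linarith : (1 : ℝ) ≤ 1 + t)
  -- `log (1 + t) = 2 log √(1 + t) ≤ 2 (√(1 + t) - 1)`, and `t - 2 (√(1 + t) - 1) = (√(1 + t) - 1)²`
  have hlog : log (1 + t) ≤ 2 * (√(1 + t) - 1) := by
    have := log_le_sub_one_of_pos (by positivity : 0 < √(1 + t))
    rw [log_sqrt (by linarith)] at this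
    linarith
  have hsq : t ^ 2 / (4 * (1 + t)) ≤ (√(1 + t) - 1) ^ 2 := by
    rw [div_le_iff₀ (by positivity)]
    nlinarith
  nlinarith

theorem Real.abs_log_one_add_sub_self_add_sq_le {t : ℝ} (ht : |t| ≤ 1 / 2) :
    |log (1 + t) - t + t ^ 2 / 2| ≤ 2 * |t| ^ 3 := by
  have h := abs_log_sub_add_sum_range_le (x := -t) (by rw [abs_neg]; linarith) 2
  norm_num [Finset.sum_range_succ] at h
  calc |log (1 + t) - t + t ^ 2 / 2| = |-t + t ^ 2 / 2 + log (1 + t)| := by ring_nf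
    _ ≤ |t| ^ 3 / (1 - |t|) := h
    _ ≤ 2 * |t| ^ 3 := by
        rw [div_le_iff₀ (by linarith)]
        nlinarith [pow_nonneg (abs_nonneg t) 3]

theorem Real.tendsto_log_one_add_sub_self_div_sq :
    Tendsto (fun t => (log (1 + t) - t) / t ^ 2) (𝓝[≠] 0) (𝓝 (-(1 / 2))) := by
  rw [tendsto_iff_norm_sub_tendsto_zero]
  have hbound : Tendsto (fun t : ℝ => 2 * |t|) (𝓝[≠] 0) (𝓝 0) := by
    simpa using ((continuous_abs.tendsto (0 : ℝ)).const_mul 2).mono_left nhdsWithin_le_nhds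
  refine squeeze_zero_norm' ?_ hbound
  have hsmall : ∀ᶠ t : ℝ in 𝓝[≠] 0, |t| ≤ 1 / 2 :=
    nhdsWithin_le_nhds <| Filter.mem_of_superset (Metric.closedBall_mem_nhds (0 : ℝ) one_half_pos)
      fun t ht => by simpa using ht
  filter_upwards [hsmall, self_mem_nhdsWithin] with t hsmall (ht : t ≠ 0)
  rw [norm_norm, Real.norm_eq_abs, sub_neg_eq_add, div_add' _ _ _ (by positivity), abs_div,
    abs_of_pos (by positivity : 0 < t ^ 2), div_le_iff₀ (by positivity)]
  calc |log (1 + t) - t + 1 / 2 * t ^ 2| = |log (1 + t) - t + t ^ 2 / 2| := by ring_nf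
    _ ≤ 2 * |t| ^ 3 := abs_log_one_add_sub_self_add_sq_le hsmall
    _ = 2 * |t| * t ^ 2 := by rw [← sq_abs t]; ring

noncomputable def recordIntegrand (n : ℕ) (x : ℝ) : ℝ := exp (-x) * ((1 + x) * exp (-x)) ^ n

lemma recordIntegrand_eq_exp (n : ℕ) {x : ℝ} (hx : -1 < x) :
    recordIntegrand n x = exp (-x + n * (log (1 + x) - x)) := by
  have hbase : (1 + x) * exp (-x) = exp (log (1 + x) - x) := by
    rw [exp_sub, exp_log (by linarith), exp_neg, div_eq_mul_inv]
  rw [recordIntegrand, hbase, ← exp_nat_mul, ← exp_add]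

lemma tendsto_div_sqrt_nhdsNE_zero {y : ℝ} (hy : 0 < y) :
    Tendsto (fun n : ℕ => y / √n) atTop (𝓝[≠] 0) := by
  refine tendsto_nhdsWithin_iff.mpr
    ⟨tendsto_const_nhds.div_atTop (tendsto_sqrt_atTop.comp tendsto_natCast_atTop_atTop), ?_⟩
  filter_upwards [eventually_ne_atTop 0] with n hn
  exact (div_pos hy (sqrt_pos.mpr (by positivity))).ne'

lemma recordIntegrand_div_sqrt_le {n : ℕ} (hn : n ≠ 0) {y : ℝ} (hy : 0 ≤ y) :
    recordIntegrand n (y / √n) ≤ exp (-(y ^ 2 / (4 * (1 + y)))) := by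
  have hsqrt : 1 ≤ √(n : ℝ) := one_le_sqrt.mpr (by exact_mod_cast Nat.one_le_iff_ne_zero.mpr hn)
  set t := y / √n
  have ht : 0 ≤ t := by positivity
  have hty : t ≤ y := div_le_self hy hsqrt
  have hnt : (n : ℝ) * t ^ 2 = y ^ 2 := by
    rw [div_pow, sq_sqrt (Nat.cast_nonneg n)]; field_simp
  rw [recordIntegrand_eq_exp n (by linarith), exp_le_exp]
  calc -t + n * (log (1 + t) - t) ≤ n * (-(t ^ 2 / (4 * (1 + t)))) := by
        nlinarith [log_one_add_sub_self_le ht, (Nat.cast_nonneg n : (0 : ℝ) ≤ n)]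
    _ = -(y ^ 2 / (4 * (1 + t))) := by rw [← hnt]; ring
    _ ≤ -(y ^ 2 / (4 * (1 + y))) := by gcongr

lemma tendsto_recordIntegrand_div_sqrt {y : ℝ} (hy : 0 < y) :
    Tendsto (fun n : ℕ => recordIntegrand n (y / √n)) atTop (𝓝 (exp (-(1 / 2) * y ^ 2))) := by
  have ht := tendsto_div_sqrt_nhdsNE_zero hy
  have hlim : Tendsto
      (fun n : ℕ => -(y / √n) + y ^ 2 * ((log (1 + y / √n) - y / √n) / (y / √n) ^ 2)) atTop
      (𝓝 (-0 + y ^ 2 * (-(1 / 2)))) :=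
    ((tendsto_nhdsWithin_iff.mp ht).1.neg).add
      ((tendsto_log_one_add_sub_self_div_sq.comp ht).const_mul _)
  rw [show -0 + y ^ 2 * (-(1 / 2)) = -(1 / 2) * y ^ 2 by ring] at hlim
  refine (continuous_exp.tendsto _).comp hlim |>.congr' ?_
  filter_upwards [eventually_ne_atTop 0] with n hn
  have hnt : (n : ℝ) = y ^ 2 / (y / √n) ^ 2 := by
    rw [div_pow, sq_sqrt (Nat.cast_nonneg n)]; field_simp
  have htpos : 0 < y / √n := by positivity
  rw [Function.comp_apply]
  generalize y / √n = t at hnt htpos ⊢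
  rw [recordIntegrand_eq_exp n (by linarith), hnt]
  field_simp

lemma integrableOn_exp_neg_sq_div_one_add :
    IntegrableOn (fun y : ℝ => exp (-(y ^ 2 / (4 * (1 + y))))) (Ioi 0) := by
  refine Integrable.mono' ((exp_neg_integrableOn_Ioi 0 (by norm_num : (0 : ℝ) < 4⁻¹)).const_mul
    (exp 4⁻¹)) (Measurable.aestronglyMeasurable (by fun_prop)) ?_
  rw [ae_restrict_iff' measurableSet_Ioi]
  refine ae_of_all _ fun y (hy : 0 < y) => ?_
  rw [norm_of_nonneg (exp_nonneg _), ← exp_add, exp_le_exp]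
  have : (y - 1) / 4 ≤ y ^ 2 / (4 * (1 + y)) := by
    rw [div_le_div_iff₀ (by norm_num) (by positivity)]
    nlinarith
  linarith

lemma sqrt_mul_integral_recordIntegrand {n : ℕ} (hn : n ≠ 0) :
    √n * ∫ x in Ioi 0, recordIntegrand n x = ∫ y in Ioi 0, recordIntegrand n (y / √n) := by
  have hsqrt : 0 < √(n : ℝ) := sqrt_pos.mpr (by positivity)
  simp_rw [div_eq_inv_mul _ √(n : ℝ)]
  rw [integral_comp_mul_left_Ioi _ _ (inv_pos.mpr hsqrt), mul_zero, smul_eq_mul, inv_inv]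

lemma tendsto_sqrt_mul_integral_recordIntegrand :
    Tendsto (fun n : ℕ => √n * ∫ x in Ioi 0, recordIntegrand n x) atTop (𝓝 (√(2 * π) / 2)) := by
  have hgauss := integral_gaussian_Ioi (1 / 2)
  rw [show π / (1 / 2) = 2 * π by ring] at hgauss
  rw [← hgauss]
  refine Tendsto.congr' (EventuallyEq.symm ?_) <|
    tendsto_integral_filter_of_dominated_convergence (F := fun n y => recordIntegrand n (y / √n)) _
      (.of_forall fun n => Continuous.aestronglyMeasurable (by unfold recordIntegrand; fun_prop))
      ?_ integrableOn_exp_neg_sq_div_one_add ?_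
  · filter_upwards [eventually_ne_atTop 0] with n hn using sqrt_mul_integral_recordIntegrand hn
  · filter_upwards [eventually_ne_atTop 0] with n hn
    refine (ae_restrict_iff' measurableSet_Ioi).mpr (ae_of_all _ fun y (hy : 0 < y) => ?_)
    rw [norm_of_nonneg (by unfold recordIntegrand; positivity)]
    exact recordIntegrand_div_sqrt_le hn hy.le
  · exact (ae_restrict_iff' measurableSet_Ioi).mpr
      (ae_of_all _ fun y (hy : 0 < y) => tendsto_recordIntegrand_div_sqrt hy)

theorem Asymptotics.IsEquivalent.sum_range {u v : ℕ → ℝ} (h : u ~[atTop] v) (hv : 0 ≤ v)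
    (hsum : Tendsto (fun n => ∑ i ∈ Finset.range n, v i) atTop atTop) :
    (fun n => ∑ i ∈ Finset.range n, u i) ~[atTop] fun n => ∑ i ∈ Finset.range n, v i :=
  (h.isLittleO.sum_range hv hsum).congr_left fun n => by simp [Finset.sum_sub_distrib]

theorem Asymptotics.isEquivalent_of_tendsto_mul {α : Type*} {l : Filter α} {u v w : α → ℝ}
    {c : ℝ} (hc : c ≠ 0) (hu : Tendsto (fun x => w x * u x) l (𝓝 c))
    (hv : Tendsto (fun x => w x * v x) l (𝓝 c)) : u ~[l] v := by
  refine isEquivalent_of_tendsto_one ?_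
  have h := hu.div hv hc
  rw [div_self hc] at h
  refine h.congr' ?_
  filter_upwards [hv.eventually_ne hc] with x hx
  exact mul_div_mul_left _ _ (left_ne_zero_of_mul hx)

lemma tendsto_sqrt_mul_sqrt_succ_sub_sqrt :
    Tendsto (fun n : ℕ => √n * (√(n + 1) - √n)) atTop (𝓝 (1 / 2)) := by
  have h : Tendsto (fun n : ℕ => (√(1 + (n : ℝ)⁻¹) + 1)⁻¹) atTop (𝓝 ((√(1 + 0) + 1)⁻¹)) :=
    (((tendsto_inv_atTop_nhds_zero_nat.const_add 1).sqrt).add_const 1).inv₀ (by positivity)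
  rw [add_zero, sqrt_one, one_add_one_eq_two, inv_eq_one_div] at h
  refine h.congr' ?_
  filter_upwards [eventually_ne_atTop 0] with n hn
  have hn' : (0 : ℝ) < n := by positivity
  have hs := sq_sqrt hn'.le
  have hr := sq_sqrt (by positivity : (0 : ℝ) ≤ n + 1)
  have hs0 := sqrt_pos.mpr hn'
  rw [show 1 + (n : ℝ)⁻¹ = (n + 1) / n by field_simp, sqrt_div' _ hn'.le,
    div_add_one hs0.ne', inv_div, div_eq_iff (by positivity)]
  nlinarith

lemma sum_range_sqrt_succ_sub_sqrt (n : ℕ) :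
    ∑ i ∈ Finset.range n, (√((i : ℝ) + 1) - √i) = √n := by
  simpa using Finset.sum_range_sub (fun i : ℕ => √(i : ℝ)) n

/-- For `k = 2`, `E[X_{n,1}] = ∑_{i=0}^{n-1} ∫_0^∞ e^{-x} ((1+x)e^{-x})^i dx ~ √(2πn)`. -/
theorem stmt14 :
    Tendsto (fun n : ℕ =>
        (∑ i ∈ Finset.range n, ∫ x in Set.Ioi (0 : ℝ),
            Real.exp (-x) * ((1 + x) * Real.exp (-x)) ^ i) / Real.sqrt (2 * π * n))
      atTop (nhds 1) := by
  have hequiv : (fun n : ℕ => ∫ x in Ioi 0, recordIntegrand n x) ~[atTop]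
      fun n => √(2 * π) * (√((n : ℝ) + 1) - √n) := by
    refine isEquivalent_of_tendsto_mul (w := fun n => √n) (by positivity)
      tendsto_sqrt_mul_integral_recordIntegrand ?_
    simpa [mul_left_comm, div_eq_mul_inv] using
      tendsto_sqrt_mul_sqrt_succ_sub_sqrt.const_mul √(2 * π)
  have hpartial (n : ℕ) :
      ∑ i ∈ Finset.range n, √(2 * π) * (√((i : ℝ) + 1) - √i) = √(2 * π * n) := by
    rw [← Finset.mul_sum, sum_range_sqrt_succ_sub_sqrt, sqrt_mul two_pi_pos.le]
  have hsum := hequiv.sum_range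
    (fun n => mul_nonneg (sqrt_nonneg _) (sub_nonneg.mpr (sqrt_le_sqrt (by linarith))))
    (by simp only [hpartial]
        exact tendsto_sqrt_atTop.comp (tendsto_natCast_atTop_atTop.const_mul_atTop two_pi_pos))
  simp only [hpartial] at hsum
  refine (isEquivalent_iff_tendsto_one ?_).mp hsum
  filter_upwards [eventually_ne_atTop 0] with n hn
  positivity
end

section
/- Let k ≥ 1 and let Y ~ Gamma(k,1), and conditionally on Y, let Z ~ Poisson(Y); set W = min(Z, k). Then E[W] = k(1 - binomial(2k,k)/4^k). -/
open MeasureTheory Real Set Finset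

/-!
Write `k = m + 1`. Integrating the Poisson weight `e^{-y} y^z / z!` against the `Gamma(k, 1)`
density gives `P(Z = z) = C(z + m, m) / 2^(k + z)`, so `Z` is negative binomial with parameter
`1/2` and `E[min(Z, k)] = k - ∑_{z < k} (k - z) P(Z = z)`. Since `(m + 1) C(n + m, m + 1) =
n C(n + m, m)`, the partial sums of this finite deficit telescope to
`2 k C(n + m, k) / 2^n`, which at `n = k` is `k C(2k, k) / 4^k`.
-/

theorem sum_range_sub_mul_choose_mul_half_pow (m n : ℕ) :
    ∑ z ∈ range n, ((m + 1 : ℝ) - z) * ((z + m).choose m * (1 / 2) ^ z)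
      = 2 * (m + 1) * (n + m).choose (m + 1) * (1 / 2) ^ n := by
  induction n with
  | zero => simp
  | succ n ih =>
    have pascal : (n + 1 + m).choose (m + 1) = (n + m).choose m + (n + m).choose (m + 1) := by
      rw [Nat.add_right_comm]; exact Nat.choose_succ_succ' _ _
    have absorb : ((n + m).choose (m + 1) : ℝ) * (m + 1) = (n + m).choose m * n := by
      exact_mod_cast (Nat.add_sub_cancel n m ▸ Nat.choose_succ_right_eq (n + m) m)
    rw [sum_range_succ, ih, pascal, pow_succ]
    push_cast
    linear_combination (1 / 2 : ℝ) ^ n * absorb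

theorem Nat.choose_two_mul_add_two_eq_two_mul_choose (m : ℕ) :
    (2 * m + 2).choose (m + 1) = 2 * (2 * m + 1).choose (m + 1) := by
  rw [Nat.choose_succ_succ', ← Nat.choose_symm_half]; ring

theorem hasSum_choose_mul_half_pow (m : ℕ) :
    HasSum (fun z : ℕ ↦ ((z + m).choose m : ℝ) * (1 / 2) ^ z) (2 ^ (m + 1)) := by
  have h := hasSum_choose_mul_geometric_of_norm_lt_one (𝕜 := ℝ) m (r := 1 / 2) (by norm_num)
  rwa [show (1 : ℝ) / (1 - 1 / 2) ^ (m + 1) = 2 ^ (m + 1) by norm_num [← inv_pow]] at h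

theorem hasSum_min_mul_choose_mul_half_pow (m : ℕ) :
    HasSum (fun z : ℕ ↦ ((min z (m + 1) : ℕ) : ℝ) * ((z + m).choose m * (1 / 2) ^ z))
      ((m + 1) * (2 ^ (m + 1) - (2 * m + 2).choose (m + 1) * (1 / 2) ^ (m + 1))) := by
  set w : ℕ → ℝ := fun z ↦ (z + m).choose m * (1 / 2) ^ z
  have deficit_support :
      ∀ z ∉ range (m + 1), ((m + 1 : ℝ) - (min z (m + 1) : ℕ)) * w z = 0 := by
    intro z hz
    rw [min_eq_right (not_lt.1 (mem_range.not.1 hz))]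
    push_cast; ring
  have deficit : HasSum (fun z ↦ ((m + 1 : ℝ) - (min z (m + 1) : ℕ)) * w z) _ :=
    hasSum_sum_of_ne_finset_zero deficit_support
  rw [sum_congr rfl fun z hz ↦ by rw [min_eq_left (mem_range.1 hz).le],
    sum_range_sub_mul_choose_mul_half_pow] at deficit
  have split : (fun z ↦ ((min z (m + 1) : ℕ) : ℝ) * w z)
      = fun z ↦ (m + 1 : ℝ) * w z - ((m + 1 : ℝ) - (min z (m + 1) : ℕ)) * w z := by
    ext z; ring
  have value : (m + 1 : ℝ) * (2 ^ (m + 1) - (2 * m + 2).choose (m + 1) * (1 / 2) ^ (m + 1))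
      = (m + 1) * 2 ^ (m + 1)
        - 2 * (m + 1) * (m + 1 + m).choose (m + 1) * (1 / 2) ^ (m + 1) := by
    rw [Nat.choose_two_mul_add_two_eq_two_mul_choose, show m + 1 + m = 2 * m + 1 by ring]
    push_cast; ring
  rw [split, value]
  exact ((hasSum_choose_mul_half_pow m).mul_left (m + 1 : ℝ)).sub deficit

theorem integral_gamma_mul_poisson (m z : ℕ) :
    ∫ y in Ioi (0 : ℝ), y ^ m * exp (-y) / m.factorial * (exp (-y) * y ^ z / z.factorial)
      = (1 / 2) ^ (m + 1) * ((z + m).choose m * (1 / 2) ^ z) := by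
  have gamma_form : ∀ y ∈ Ioi (0 : ℝ),
      y ^ m * exp (-y) / m.factorial * (exp (-y) * y ^ z / z.factorial)
        = (m.factorial * z.factorial : ℝ)⁻¹
          * (y ^ (((z + m : ℕ) : ℝ) + 1 - 1) * exp (-(2 * y))) := by
    intro y _
    rw [add_sub_cancel_right, rpow_natCast, pow_add, two_mul, neg_add, exp_add]
    field_simp
  have factorials :
      ((z + m).choose m * (z.factorial * m.factorial) : ℝ) = (z + m).factorial := by
    exact_mod_cast (mul_assoc _ _ _).symm.trans (Nat.add_choose_mul_factorial_mul_factorial z m)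
  rw [setIntegral_congr_fun measurableSet_Ioi gamma_form, integral_const_mul,
    integral_rpow_mul_exp_neg_mul_Ioi (by positivity) two_pos, Gamma_nat_eq_factorial,
    ← factorials, ← Nat.cast_add_one, rpow_natCast]
  field_simp
  ring

theorem integral_gamma_mul_tsum_poisson (m : ℕ) {c : ℕ → ℝ} (hc : ∀ z, 0 ≤ c z)
    {s : ℝ}
    (hs : HasSum (fun z ↦ c z * ((z + m).choose m * (1 / 2) ^ z)) s) :
    ∫ y in Ioi (0 : ℝ), y ^ m * exp (-y) / m.factorial *
        ∑' z : ℕ, exp (-y) * y ^ z / z.factorial * c z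
      = (1 / 2) ^ (m + 1) * s := by
  set F : ℕ → ℝ → ℝ := fun z y ↦
    y ^ m * exp (-y) / m.factorial * (exp (-y) * y ^ z / z.factorial)
  have integral_F (z : ℕ) : ∫ y in Ioi (0 : ℝ), F z y * c z
      = (1 / 2) ^ (m + 1) * (c z * ((z + m).choose m * (1 / 2) ^ z)) := by
    rw [integral_mul_const, integral_gamma_mul_poisson]; ring
  have integrable_F (z : ℕ) : IntegrableOn (fun y ↦ F z y * c z) (Ioi 0) :=
    have := Nat.choose_pos (Nat.le_add_left m z)
    (Integrable.of_integral_ne_zero (by rw [integral_gamma_mul_poisson]; positivity)).mul_const _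
  have norm_F (z : ℕ) :
      ∫ y in Ioi (0 : ℝ), ‖F z y * c z‖ = ∫ y in Ioi (0 : ℝ), F z y * c z :=
    setIntegral_congr_fun measurableSet_Ioi fun y hy ↦
      norm_of_nonneg (mul_nonneg (by have : (0 : ℝ) < y := hy; positivity) (hc z))
  have swap := hasSum_integral_of_summable_integral_norm integrable_F
    (by simpa only [norm_F, integral_F] using (hs.mul_left ((1 / 2) ^ (m + 1))).summable)
  simp only [integral_F] at swap
  rw [(hs.mul_left _).unique swap]
  congr with y
  rw [← tsum_mul_left]
  simp only [F, mul_assoc]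

/-- Let `Y ~ Gamma(k,1)` and, given `Y = y`, `Z ~ Poisson(y)`; set `W = min(Z,k)`.
Then `E[W] = ∫_0^∞ (y^{k-1}e^{-y}/(k-1)!) ∑_z min(z,k) e^{-y} y^z/z! dy
= k (1 - C(2k,k)/4^k)`. -/
theorem stmt16 (k : ℕ) (hk : 1 ≤ k) :
    (∫ y in Set.Ioi (0 : ℝ),
        y ^ (k - 1) * Real.exp (-y) / (Nat.factorial (k - 1) : ℝ) *
          ∑' z : ℕ, Real.exp (-y) * y ^ z / (Nat.factorial z : ℝ) * (min z k : ℕ))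
      = k * (1 - (Nat.choose (2 * k) k : ℝ) / 4 ^ k) := by
  obtain ⟨m, rfl⟩ : ∃ m, k = m + 1 := ⟨k - 1, by omega⟩
  rw [Nat.add_sub_cancel, integral_gamma_mul_tsum_poisson m (fun z ↦ Nat.cast_nonneg _)
    (hasSum_min_mul_choose_mul_half_pow m), show 2 * (m + 1) = 2 * m + 2 by ring]
  have four_pow : (4 : ℝ) ^ (m + 1) = 2 ^ (m + 1) * 2 ^ (m + 1) := by rw [← mul_pow]; norm_num
  push_cast
  rw [four_pow, one_div_pow]
  field_simp
end
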